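/- The ready simulation preorder ⊑_RS on CLL process terms is a precongruence: if t1 ⊑_RS t2 and s1 ⊑_RS s2, then (1) α.t1 ⊑_RS α.t2 for each α ∈ Act_τ, and (2) t1⊙s1 ⊑_RS t2⊙s2 for each ⊙ ∈ {□, ∧, ∥_A, ∨}. -/
import Mathlib


namespace CLL

attribute [local instance] Classical.propDecidable

/-- CLL process terms over a set `Act` of visible actions.  The action `τ` is
represented by `none : Option Act`, a visible action `a` by `some a`. -/
inductive Tm (Act : Type) : Type where
  | nil  : Tm Act                            -- 0
  | bot  : Tm Act                            -- ⊥
  | pre  : Option Act → Tm Act → Tm Act      -- α.t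
  | ec   : Tm Act → Tm Act → Tm Act          -- t □ t
  | conj : Tm Act → Tm Act → Tm Act          -- t ∧ t
  | disj : Tm Act → Tm Act → Tm Act          -- t ∨ t
  | par  : Set Act → Tm Act → Tm Act → Tm Act -- t ∥_A t

/-- A transition model: a set of transitions `t →α t'`, of instances `t F` of the
inconsistency predicate, and of instances `t F̄_α` of the auxiliary predicates. -/
structure Model (Act : Type) where
  Tr   : Tm Act → Option Act → Tm Act → Prop
  F    : Tm Act → Prop
  Fbar : Tm Act → Option Act → Prop

variable {Act : Type}

/-- The least transition relation of the positive TSS `Strip(P_CLL, M)`: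
ground instances of transition rules of `P_CLL` whose negative premises
(checked against `M`) hold, with those negative premises removed. -/
inductive STr (M : Model Act) : Tm Act → Option Act → Tm Act → Prop where
  | pre (α : Option Act) (t : Tm Act) : STr M (Tm.pre α t) α t
  | ecL {t1 t2 y1 : Tm Act} {a : Act} :
      STr M t1 (some a) y1 → (∀ y, ¬ M.Tr t2 none y) →
      STr M (Tm.ec t1 t2) (some a) y1
  | ecR {t1 t2 y2 : Tm Act} {a : Act} :
      (∀ y, ¬ M.Tr t1 none y) → STr M t2 (some a) y2 →
      STr M (Tm.ec t1 t2) (some a) y2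
  | ecTauL {t1 t2 y1 : Tm Act} :
      STr M t1 none y1 → STr M (Tm.ec t1 t2) none (Tm.ec y1 t2)
  | ecTauR {t1 t2 y2 : Tm Act} :
      STr M t2 none y2 → STr M (Tm.ec t1 t2) none (Tm.ec t1 y2)
  | conjAct {t1 t2 y1 y2 : Tm Act} {a : Act} :
      STr M t1 (some a) y1 → STr M t2 (some a) y2 →
      STr M (Tm.conj t1 t2) (some a) (Tm.conj y1 y2)
  | conjTauL {t1 t2 y1 : Tm Act} :
      STr M t1 none y1 → STr M (Tm.conj t1 t2) none (Tm.conj y1 t2)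
  | conjTauR {t1 t2 y2 : Tm Act} :
      STr M t2 none y2 → STr M (Tm.conj t1 t2) none (Tm.conj t1 y2)
  | disjL (t1 t2 : Tm Act) : STr M (Tm.disj t1 t2) none t1
  | disjR (t1 t2 : Tm Act) : STr M (Tm.disj t1 t2) none t2
  | parTauL {A : Set Act} {t1 t2 y1 : Tm Act} :
      STr M t1 none y1 → STr M (Tm.par A t1 t2) none (Tm.par A y1 t2)
  | parTauR {A : Set Act} {t1 t2 y2 : Tm Act} :
      STr M t2 none y2 → STr M (Tm.par A t1 t2) none (Tm.par A t1 y2)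
  | parL {A : Set Act} {t1 t2 y1 : Tm Act} {a : Act} :
      STr M t1 (some a) y1 → (∀ y, ¬ M.Tr t2 none y) → a ∉ A →
      STr M (Tm.par A t1 t2) (some a) (Tm.par A y1 t2)
  | parR {A : Set Act} {t1 t2 y2 : Tm Act} {a : Act} :
      (∀ y, ¬ M.Tr t1 none y) → STr M t2 (some a) y2 → a ∉ A →
      STr M (Tm.par A t1 t2) (some a) (Tm.par A t1 y2)
  | parSync {A : Set Act} {t1 t2 y1 y2 : Tm Act} {a : Act} :
      STr M t1 (some a) y1 → STr M t2 (some a) y2 → a ∈ A →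
      STr M (Tm.par A t1 t2) (some a) (Tm.par A y1 y2)

/-- Least model of the `F̄_α` rules of `Strip(P_CLL, M)`. -/
inductive SFbar (M : Model Act) : Tm Act → Option Act → Prop where
  | intro {t1 t2 y : Tm Act} {α : Option Act} :
      STr M (Tm.conj t1 t2) α y → ¬ M.F y → SFbar M (Tm.conj t1 t2) α

/-- Least model of the `F` rules of `Strip(P_CLL, M)`. -/
inductive SF (M : Model Act) : Tm Act → Prop where
  | bot : SF M Tm.bot
  | pre {t : Tm Act} (α : Option Act) : SF M t → SF M (Tm.pre α t)
  | disj {t1 t2 : Tm Act} : SF M t1 → SF M t2 → SF M (Tm.disj t1 t2)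
  | ecL {t1 t2 : Tm Act} : SF M t1 → SF M (Tm.ec t1 t2)
  | ecR {t1 t2 : Tm Act} : SF M t2 → SF M (Tm.ec t1 t2)
  | conjL {t1 t2 : Tm Act} : SF M t1 → SF M (Tm.conj t1 t2)
  | conjR {t1 t2 : Tm Act} : SF M t2 → SF M (Tm.conj t1 t2)
  | parL {A : Set Act} {t1 t2 : Tm Act} : SF M t1 → SF M (Tm.par A t1 t2)
  | parR {A : Set Act} {t1 t2 : Tm Act} : SF M t2 → SF M (Tm.par A t1 t2)
  | conjMisL {t1 t2 y1 : Tm Act} {a : Act} :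
      STr M t1 (some a) y1 → (∀ y, ¬ M.Tr t2 (some a) y) →
      (∀ y, ¬ M.Tr (Tm.conj t1 t2) none y) → SF M (Tm.conj t1 t2)
  | conjMisR {t1 t2 y2 : Tm Act} {a : Act} :
      (∀ y, ¬ M.Tr t1 (some a) y) → STr M t2 (some a) y2 →
      (∀ y, ¬ M.Tr (Tm.conj t1 t2) none y) → SF M (Tm.conj t1 t2)
  | conjDead {t1 t2 z : Tm Act} {α : Option Act} :
      STr M (Tm.conj t1 t2) α z → ¬ M.Fbar (Tm.conj t1 t2) α →
      SF M (Tm.conj t1 t2)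

/-- `M` is a stable transition model of `P_CLL`:  `M` coincides with the least
model of the positive TSS `Strip(P_CLL, M)`. -/
def IsStable (M : Model Act) : Prop :=
  (∀ t α t', M.Tr t α t' ↔ STr M t α t') ∧
  (∀ t, M.F t ↔ SF M t) ∧
  (∀ t α, M.Fbar t α ↔ SFbar M t α)

/-- `t` is stable: it has no τ-transition. -/
def Stable (M : Model Act) (t : Tm Act) : Prop := ∀ t', ¬ M.Tr t none t'

/-- The ready set `I(t)`. -/
def Ready (M : Model Act) (t : Tm Act) : Set (Option Act) :=
  {α | ∃ u, M.Tr t α u}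

/-- One τ-step between consistent terms: `t →τ_F s`. -/
def TauF (M : Model Act) (t s : Tm Act) : Prop :=
  M.Tr t none s ∧ ¬ M.F t ∧ ¬ M.F s

/-- `t ⇒ε_F s`: a sequence of τ-transitions all whose terms (endpoints included)
are consistent. -/
def EpsF (M : Model Act) (t s : Tm Act) : Prop :=
  ¬ M.F t ∧ Relation.ReflTransGen (TauF M) t s

/-- `t ⇒ε_F| s`:  `t ⇒ε_F s` with `s` stable. -/
def EpsFS (M : Model Act) (t s : Tm Act) : Prop :=
  EpsF M t s ∧ Stable M s

/-- `t ⇒α_F s`. -/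
def WeakF (M : Model Act) (α : Option Act) (t s : Tm Act) : Prop :=
  ∃ r p, EpsF M t r ∧ M.Tr r α p ∧ EpsF M p s

/-- `t ⇒α_F| s`. -/
def WeakFS (M : Model Act) (α : Option Act) (t s : Tm Act) : Prop :=
  WeakF M α t s ∧ Stable M s

/-- `R` is a stable ready simulation relation. -/
def IsRS (M : Model Act) (R : Tm Act → Tm Act → Prop) : Prop :=
  ∀ t s, R t s →
    (Stable M t ∧ Stable M s) ∧
    (¬ M.F t → ¬ M.F s) ∧
    (∀ (a : Act) t', WeakFS M (some a) t t' →
      ∃ s', WeakFS M (some a) s s' ∧ R t' s') ∧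
    (¬ M.F t → Ready M t = Ready M s)

/-- `t ⊏̃_RS s`. -/
def RSs (M : Model Act) (t s : Tm Act) : Prop :=
  ∃ R, IsRS M R ∧ R t s

/-- `t ⊑_RS s`. -/
def RSle (M : Model Act) (t s : Tm Act) : Prop :=
  ∀ t', EpsFS M t t' → ∃ s', EpsFS M s s' ∧ RSs M t' s'

/-- `t =_RS s`. -/
def RSeq (M : Model Act) (t s : Tm Act) : Prop :=
  RSle M t s ∧ RSle M s t

/-- The binary operators `□`, `∧` and `∥_A`. -/
def IsStaticOp (Act : Type) (op : Tm Act → Tm Act → Tm Act) : Prop :=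
  op = Tm.ec ∨ op = Tm.conj ∨ ∃ A : Set Act, op = Tm.par A

/-- General external choice `□_{i<n} t_i` over a finite sequence of terms. -/
def bigEC : List (Tm Act) → Tm Act
  | [] => Tm.nil
  | t :: ts => ts.foldl Tm.ec t

/-- General disjunction `⋁_{i<n} t_i` over a finite (nonempty) sequence. -/
def bigDisj : List (Tm Act) → Tm Act
  | [] => Tm.nil
  | t :: ts => ts.foldl Tm.disj t

/-- `□_{i<n} a_i.t_i` for a sequence of prefixed terms given by pairs. -/
def ecPre (l : List (Act × Tm Act)) : Tm Act :=
  bigEC (l.map fun p => Tm.pre (some p.1) p.2)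

/-- The sequence of all `a_i.(t_i ∧ s_j)` with `a_i = b_j`. -/
noncomputable def matched (l1 l2 : List (Act × Tm Act)) : List (Act × Tm Act) :=
  ((l1.product l2).filter fun q => decide (q.1.1 = q.2.1)).map
    fun q => (q.1.1, Tm.conj q.1.2 q.2.2)

/-- The right-hand side `((□Ω1)□(□Ω2))□(□Ω3)` of the expansion law. -/
noncomputable def expRHS (A : Set Act) (l1 l2 : List (Act × Tm Act)) : Tm Act :=
  Tm.ec
    (Tm.ec
      (bigEC ((l1.filter fun p => decide (p.1 ∉ A)).map
        fun p => Tm.pre (some p.1) (Tm.par A p.2 (ecPre l2))))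
      (bigEC ((l2.filter fun q => decide (q.1 ∉ A)).map
        fun q => Tm.pre (some q.1) (Tm.par A (ecPre l1) q.2))))
    (bigEC (((l1.product l2).filter fun q => decide (q.1.1 = q.2.1 ∧ q.1.1 ∈ A)).map
      fun q => Tm.pre (some q.1.1) (Tm.par A q.1.2 q.2.2)))

/-- Basic process terms: built from `0` by prefixing, `∨`, `□` and `∥_A`. -/
inductive Basic : Tm Act → Prop where
  | nil : Basic Tm.nil
  | pre (α : Option Act) {t : Tm Act} : Basic t → Basic (Tm.pre α t)
  | disj {t1 t2 : Tm Act} : Basic t1 → Basic t2 → Basic (Tm.disj t1 t2)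
  | ec {t1 t2 : Tm Act} : Basic t1 → Basic t2 → Basic (Tm.ec t1 t2)
  | par (A : Set Act) {t1 t2 : Tm Act} :
      Basic t1 → Basic t2 → Basic (Tm.par A t1 t2)

/-- Derivability `⊢ t ≤ s` in the axiomatic system `AX_CLL`. -/
inductive Deriv : Tm Act → Tm Act → Prop where
  -- inference rules
  | refl (t : Tm Act) : Deriv t t
  | trans {t u s : Tm Act} : Deriv t u → Deriv u s → Deriv t s
  | pre_mono (α : Option Act) {t s : Tm Act} :
      Deriv t s → Deriv (Tm.pre α t) (Tm.pre α s)
  | ec_mono {t1 s1 t2 s2 : Tm Act} :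
      Deriv t1 s1 → Deriv t2 s2 → Deriv (Tm.ec t1 t2) (Tm.ec s1 s2)
  | conj_mono {t1 s1 t2 s2 : Tm Act} :
      Deriv t1 s1 → Deriv t2 s2 → Deriv (Tm.conj t1 t2) (Tm.conj s1 s2)
  | disj_mono {t1 s1 t2 s2 : Tm Act} :
      Deriv t1 s1 → Deriv t2 s2 → Deriv (Tm.disj t1 t2) (Tm.disj s1 s2)
  | par_mono (A : Set Act) {t1 s1 t2 s2 : Tm Act} :
      Deriv t1 s1 → Deriv t2 s2 → Deriv (Tm.par A t1 t2) (Tm.par A s1 s2)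
  -- EC1–EC5
  | ec_comm (x y : Tm Act) : Deriv (Tm.ec x y) (Tm.ec y x)
  | ec_assoc1 (x y z : Tm Act) : Deriv (Tm.ec (Tm.ec x y) z) (Tm.ec x (Tm.ec y z))
  | ec_assoc2 (x y z : Tm Act) : Deriv (Tm.ec x (Tm.ec y z)) (Tm.ec (Tm.ec x y) z)
  | ec_idem1 (x : Tm Act) : Deriv (Tm.ec x x) x
  | ec_idem2 (x : Tm Act) : Deriv x (Tm.ec x x)
  | ec_nil1 (x : Tm Act) : Deriv (Tm.ec x Tm.nil) x
  | ec_nil2 (x : Tm Act) : Deriv x (Tm.ec x Tm.nil)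
  | ec_bot1 (x : Tm Act) : Deriv (Tm.ec x Tm.bot) Tm.bot
  | ec_bot2 (x : Tm Act) : Deriv Tm.bot (Tm.ec x Tm.bot)
  -- DI1–DI5
  | di_comm (x y : Tm Act) : Deriv (Tm.disj x y) (Tm.disj y x)
  | di_assoc1 (x y z : Tm Act) :
      Deriv (Tm.disj x (Tm.disj y z)) (Tm.disj (Tm.disj x y) z)
  | di_assoc2 (x y z : Tm Act) :
      Deriv (Tm.disj (Tm.disj x y) z) (Tm.disj x (Tm.disj y z))
  | di_idem1 (x : Tm Act) : Deriv (Tm.disj x x) x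
  | di_idem2 (x : Tm Act) : Deriv x (Tm.disj x x)
  | di_bot1 (x : Tm Act) : Deriv (Tm.disj x Tm.bot) x
  | di_bot2 (x : Tm Act) : Deriv x (Tm.disj x Tm.bot)
  | di_le (x y : Tm Act) : Deriv x (Tm.disj x y)
  -- CO1–CO4
  | co_comm (x y : Tm Act) : Deriv (Tm.conj x y) (Tm.conj y x)
  | co_assoc1 (x y z : Tm Act) :
      Deriv (Tm.conj (Tm.conj x y) z) (Tm.conj x (Tm.conj y z))
  | co_assoc2 (x y z : Tm Act) :
      Deriv (Tm.conj x (Tm.conj y z)) (Tm.conj (Tm.conj x y) z)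
  | co_idem1 (x : Tm Act) : Deriv (Tm.conj x x) x
  | co_idem2 (x : Tm Act) : Deriv x (Tm.conj x x)
  | co_bot1 (x : Tm Act) : Deriv (Tm.conj x Tm.bot) Tm.bot
  | co_bot2 (x : Tm Act) : Deriv Tm.bot (Tm.conj x Tm.bot)
  -- DS1–DS4
  | ds1 (x y z : Tm Act) :
      Deriv (Tm.ec x (Tm.disj y z)) (Tm.disj (Tm.ec x y) (Tm.ec x z))
  | ds2 (x y z : Tm Act) :
      Deriv (Tm.conj x (Tm.disj y z)) (Tm.disj (Tm.conj x y) (Tm.conj x z))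
  | ds3 (A : Set Act) (x y z : Tm Act) :
      Deriv (Tm.par A x (Tm.disj y z)) (Tm.disj (Tm.par A x y) (Tm.par A x z))
  | ds4 (a : Act) {x y : Tm Act} : Basic x → Basic y →
      Deriv (Tm.pre (some a) (Tm.disj x y))
            (Tm.ec (Tm.pre (some a) x) (Tm.pre (some a) y))
  -- PR1, PR2
  | pr1a (a : Act) : Deriv (Tm.pre (some a) Tm.bot) Tm.bot
  | pr1b (a : Act) : Deriv Tm.bot (Tm.pre (some a) Tm.bot)
  | pr2a (x : Tm Act) : Deriv (Tm.pre none x) x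
  | pr2b (x : Tm Act) : Deriv x (Tm.pre none x)
  -- PA1, PA2
  | pa_comm (A : Set Act) (x y : Tm Act) : Deriv (Tm.par A x y) (Tm.par A y x)
  | pa_bot1 (A : Set Act) (x : Tm Act) : Deriv (Tm.par A x Tm.bot) Tm.bot
  | pa_bot2 (A : Set Act) (x : Tm Act) : Deriv Tm.bot (Tm.par A x Tm.bot)
  -- ECC1–ECC3
  | ecc1a (l1 l2 : List (Act × Tm Act)) :
      ({a | a ∈ l1.map Prod.fst} : Set Act) ≠ {a | a ∈ l2.map Prod.fst} →
      Deriv (Tm.conj (ecPre l1) (ecPre l2)) Tm.bot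
  | ecc1b (l1 l2 : List (Act × Tm Act)) :
      ({a | a ∈ l1.map Prod.fst} : Set Act) ≠ {a | a ∈ l2.map Prod.fst} →
      Deriv Tm.bot (Tm.conj (ecPre l1) (ecPre l2))
  | ecc2 (l : List (Act × Tm Act × Tm Act)) :
      Deriv (ecPre (l.map fun p => (p.1, Tm.conj p.2.1 p.2.2)))
            (Tm.conj (ecPre (l.map fun p => (p.1, p.2.1)))
                     (ecPre (l.map fun p => (p.1, p.2.2))))
  | ecc3 (l : List (Act × Tm Act × Tm Act)) :
      (l.map Prod.fst).Nodup →
      Deriv (Tm.conj (ecPre (l.map fun p => (p.1, p.2.1)))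
                     (ecPre (l.map fun p => (p.1, p.2.2))))
            (ecPre (l.map fun p => (p.1, Tm.conj p.2.1 p.2.2)))
  -- EXP1, EXP2
  | exp1 (A : Set Act) (l1 l2 : List (Act × Tm Act)) :
      (∀ p ∈ l1, Basic p.2) → (∀ q ∈ l2, Basic q.2) →
      Deriv (Tm.par A (ecPre l1) (ecPre l2)) (expRHS A l1 l2)
  | exp2 (A : Set Act) (l1 l2 : List (Act × Tm Act)) :
      (∀ p ∈ l1, Basic p.2) → (∀ q ∈ l2, Basic q.2) →
      Deriv (expRHS A l1 l2) (Tm.par A (ecPre l1) (ecPre l2))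

/-- The set `NF_B` of normal forms different from `⊥`. -/
inductive NFB : Tm Act → Prop where
  | mk (ls : List (List (Act × Tm Act))) :
      ls ≠ [] →
      (∀ l ∈ ls, (l.map Prod.fst).Nodup) →
      (∀ l ∈ ls, ∀ p ∈ l, NFB p.2) →
      NFB (bigDisj (ls.map ecPre))

/-- Normal forms. -/
def NF (t : Tm Act) : Prop := t = Tm.bot ∨ NFB t

end CLL

namespace CLL

section Lemmas
variable {Act : Type} {M : Model Act}

/-- size of a term -/
def sz : Tm Act → ℕ
  | .nil => 1
  | .bot => 1
  | .pre _ t => sz t + 1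
  | .ec t s => sz t + sz s + 1
  | .conj t s => sz t + sz s + 1
  | .disj t s => sz t + sz s + 1
  | .par _ t s => sz t + sz s + 1

lemma str_sz {t α t'} (h : STr M t α t') : sz t' < sz t := by
  induction h <;> simp [sz] at * <;> omega

lemma tr_str (hM : IsStable M) {t α t'} : M.Tr t α t' ↔ STr M t α t' := hM.1 t α t'
lemma f_sf (hM : IsStable M) {t} : M.F t ↔ SF M t := hM.2.1 t
lemma fbar_sfbar (hM : IsStable M) {t α} : M.Fbar t α ↔ SFbar M t α := hM.2.2 t α

lemma F_pre (hM : IsStable M) {α} {t : Tm Act} : M.F (.pre α t) ↔ M.F t := by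
  rw [f_sf hM]
  constructor
  · intro h; cases h with | pre _ h => exact (f_sf hM).mpr h
  · intro h; exact SF.pre α ((f_sf hM).mp h)

lemma F_disj (hM : IsStable M) {p q : Tm Act} : M.F (.disj p q) ↔ M.F p ∧ M.F q := by
  rw [f_sf hM]
  constructor
  · intro h; cases h with | disj h1 h2 => exact ⟨(f_sf hM).mpr h1, (f_sf hM).mpr h2⟩
  · intro h; exact SF.disj ((f_sf hM).mp h.1) ((f_sf hM).mp h.2)

lemma F_ec (hM : IsStable M) {p q : Tm Act} : M.F (.ec p q) ↔ M.F p ∨ M.F q := by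
  rw [f_sf hM]
  constructor
  · intro h; cases h with
    | ecL h => exact Or.inl ((f_sf hM).mpr h)
    | ecR h => exact Or.inr ((f_sf hM).mpr h)
  · rintro (h | h)
    · exact SF.ecL ((f_sf hM).mp h)
    · exact SF.ecR ((f_sf hM).mp h)

lemma F_par (hM : IsStable M) {A : Set Act} {p q : Tm Act} :
    M.F (.par A p q) ↔ M.F p ∨ M.F q := by
  rw [f_sf hM]
  constructor
  · intro h; cases h with
    | parL h => exact Or.inl ((f_sf hM).mpr h)
    | parR h => exact Or.inr ((f_sf hM).mpr h)
  · rintro (h | h)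
    · exact SF.parL ((f_sf hM).mp h)
    · exact SF.parR ((f_sf hM).mp h)

lemma notF_conj (hM : IsStable M) {p q : Tm Act} (h : ¬ M.F (.conj p q)) :
    ¬ M.F p ∧ ¬ M.F q := by
  constructor
  · intro hp; exact h ((f_sf hM).mpr (SF.conjL ((f_sf hM).mp hp)))
  · intro hq; exact h ((f_sf hM).mpr (SF.conjR ((f_sf hM).mp hq)))

lemma stable_pre_vis (hM : IsStable M) {a : Act} {t : Tm Act} :
    Stable M (.pre (some a) t) := by
  intro u hu; rw [tr_str hM] at hu; cases hu

lemma stable_conj_iff (hM : IsStable M) {p q : Tm Act} :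
    Stable M (.conj p q) ↔ Stable M p ∧ Stable M q := by
  constructor
  · intro h
    constructor
    · intro y hy; exact h _ ((tr_str hM).mpr (STr.conjTauL ((tr_str hM).mp hy)))
    · intro y hy; exact h _ ((tr_str hM).mpr (STr.conjTauR ((tr_str hM).mp hy)))
  · rintro ⟨h1, h2⟩ y hy
    rw [tr_str hM] at hy
    cases hy with
    | conjTauL h => exact h1 _ ((tr_str hM).mpr h)
    | conjTauR h => exact h2 _ ((tr_str hM).mpr h)

lemma stable_ec_iff (hM : IsStable M) {p q : Tm Act} :
    Stable M (.ec p q) ↔ Stable M p ∧ Stable M q := by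
  constructor
  · intro h
    constructor
    · intro y hy; exact h _ ((tr_str hM).mpr (STr.ecTauL ((tr_str hM).mp hy)))
    · intro y hy; exact h _ ((tr_str hM).mpr (STr.ecTauR ((tr_str hM).mp hy)))
  · rintro ⟨h1, h2⟩ y hy
    rw [tr_str hM] at hy
    cases hy with
    | ecTauL h => exact h1 _ ((tr_str hM).mpr h)
    | ecTauR h => exact h2 _ ((tr_str hM).mpr h)

lemma stable_par_iff (hM : IsStable M) {A : Set Act} {p q : Tm Act} :
    Stable M (.par A p q) ↔ Stable M p ∧ Stable M q := by
  constructor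
  · intro h
    constructor
    · intro y hy; exact h _ ((tr_str hM).mpr (STr.parTauL ((tr_str hM).mp hy)))
    · intro y hy; exact h _ ((tr_str hM).mpr (STr.parTauR ((tr_str hM).mp hy)))
  · rintro ⟨h1, h2⟩ y hy
    rw [tr_str hM] at hy
    cases hy with
    | parTauL h => exact h1 _ ((tr_str hM).mpr h)
    | parTauR h => exact h2 _ ((tr_str hM).mpr h)

lemma not_vis_of_tau (hM : IsStable M) :
    ∀ t : Tm Act, (∃ y, M.Tr t none y) → ∀ a u, ¬ M.Tr t (some a) u := by
  intro t
  induction t with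
  | nil => rintro ⟨y, hy⟩; rw [tr_str hM] at hy; cases hy
  | bot => rintro ⟨y, hy⟩; rw [tr_str hM] at hy; cases hy
  | pre α t _ => rintro ⟨y, hy⟩ a u hu; rw [tr_str hM] at hy hu; cases hy; cases hu
  | disj t1 t2 _ _ => intro _ a u hu; rw [tr_str hM] at hu; cases hu
  | ec t1 t2 ih1 ih2 =>
      rintro ⟨y, hy⟩ a u hu
      rw [tr_str hM] at hy hu
      cases hu with
      | ecL h1 h2 =>
        cases hy with
        | ecTauL h => exact ih1 ⟨_, (tr_str hM).mpr h⟩ a _ ((tr_str hM).mpr h1)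
        | ecTauR h => exact h2 _ ((tr_str hM).mpr h)
      | ecR h2 h1 =>
        cases hy with
        | ecTauL h => exact h2 _ ((tr_str hM).mpr h)
        | ecTauR h => exact ih2 ⟨_, (tr_str hM).mpr h⟩ a _ ((tr_str hM).mpr h1)
  | conj t1 t2 ih1 ih2 =>
      rintro ⟨y, hy⟩ a u hu
      rw [tr_str hM] at hy hu
      cases hu with
      | conjAct h1 h2 =>
        cases hy with
        | conjTauL h => exact ih1 ⟨_, (tr_str hM).mpr h⟩ a _ ((tr_str hM).mpr h1)
        | conjTauR h => exact ih2 ⟨_, (tr_str hM).mpr h⟩ a _ ((tr_str hM).mpr h2)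
  | par A t1 t2 ih1 ih2 =>
      rintro ⟨y, hy⟩ a u hu
      rw [tr_str hM] at hy hu
      cases hu with
      | parL h1 h2 _ =>
        cases hy with
        | parTauL h => exact ih1 ⟨_, (tr_str hM).mpr h⟩ a _ ((tr_str hM).mpr h1)
        | parTauR h => exact h2 _ ((tr_str hM).mpr h)
      | parR h2 h1 _ =>
        cases hy with
        | parTauL h => exact h2 _ ((tr_str hM).mpr h)
        | parTauR h => exact ih2 ⟨_, (tr_str hM).mpr h⟩ a _ ((tr_str hM).mpr h1)
      | parSync h1 h2 _ =>
        cases hy with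
        | parTauL h => exact ih1 ⟨_, (tr_str hM).mpr h⟩ a _ ((tr_str hM).mpr h1)
        | parTauR h => exact ih2 ⟨_, (tr_str hM).mpr h⟩ a _ ((tr_str hM).mpr h2)

end Lemmas
end CLL

namespace CLL

section Lemmas2
variable {Act : Type} {M : Model Act}

lemma rtg_notF {t s : Tm Act} (h : Relation.ReflTransGen (TauF M) t s) (hF : ¬ M.F t) :
    ¬ M.F s := by
  induction h with
  | refl => exact hF
  | tail _ st _ => exact st.2.2

lemma rtg_sz (hM : IsStable M) {t s : Tm Act} (h : Relation.ReflTransGen (TauF M) t s) :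
    sz s ≤ sz t := by
  induction h with
  | refl => exact le_rfl
  | tail _ st ih => exact le_trans (le_of_lt (str_sz ((tr_str hM).mp st.1))) ih

lemma stable_rtg (hM : IsStable M) {t s : Tm Act} (hst : Stable M t)
    (h : Relation.ReflTransGen (TauF M) t s) : s = t := by
  rcases h.cases_head with heq | ⟨c, hstep, _⟩
  · exact heq.symm
  · exact absurd hstep.1 (hst c)

lemma epsF_notF_right {t s : Tm Act} (h : EpsF M t s) : ¬ M.F s :=
  rtg_notF h.2 h.1

lemma conj_succ_notF (hM : IsStable M) {p q : Tm Act} {α z}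
    (hF : ¬ M.F (.conj p q)) (hz : M.Tr (.conj p q) α z) :
    ∃ y, M.Tr (.conj p q) α y ∧ ¬ M.F y := by
  by_contra hc
  push_neg at hc
  apply hF
  rw [f_sf hM]
  refine SF.conjDead ((tr_str hM).mp hz) (fun hb => ?_)
  rw [fbar_sfbar hM] at hb
  cases hb with
  | intro h hy => exact hy (hc _ ((tr_str hM).mpr h))

lemma notF_tau_succ (hM : IsStable M) :
    ∀ t : Tm Act, ¬ M.F t → ∀ w, M.Tr t none w → ∃ y, M.Tr t none y ∧ ¬ M.F y := by
  intro t
  induction t with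
  | nil => intro _ w hw; rw [tr_str hM] at hw; cases hw
  | bot => intro _ w hw; rw [tr_str hM] at hw; cases hw
  | pre α t _ =>
      intro hF w hw
      rw [tr_str hM] at hw
      cases hw
      exact ⟨t, (tr_str hM).mpr (STr.pre none t), (F_pre hM).not.mp hF⟩
  | disj t1 t2 _ _ =>
      intro hF _ _
      rw [F_disj hM] at hF
      rcases not_and_or.mp hF with h | h
      · exact ⟨t1, (tr_str hM).mpr (STr.disjL t1 t2), h⟩
      · exact ⟨t2, (tr_str hM).mpr (STr.disjR t1 t2), h⟩
  | ec t1 t2 ih1 ih2 =>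
      intro hF w hw
      rw [F_ec hM] at hF
      push_neg at hF
      rw [tr_str hM] at hw
      cases hw with
      | ecTauL h =>
        obtain ⟨y, hy, hFy⟩ := ih1 hF.1 _ ((tr_str hM).mpr h)
        exact ⟨.ec y t2, (tr_str hM).mpr (STr.ecTauL ((tr_str hM).mp hy)),
          by rw [F_ec hM]; exact not_or.mpr ⟨hFy, hF.2⟩⟩
      | ecTauR h =>
        obtain ⟨y, hy, hFy⟩ := ih2 hF.2 _ ((tr_str hM).mpr h)
        exact ⟨.ec t1 y, (tr_str hM).mpr (STr.ecTauR ((tr_str hM).mp hy)),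
          by rw [F_ec hM]; exact not_or.mpr ⟨hF.1, hFy⟩⟩
  | conj t1 t2 _ _ =>
      intro hF w hw
      exact conj_succ_notF hM hF hw
  | par A t1 t2 ih1 ih2 =>
      intro hF w hw
      rw [F_par hM] at hF
      push_neg at hF
      rw [tr_str hM] at hw
      cases hw with
      | parTauL h =>
        obtain ⟨y, hy, hFy⟩ := ih1 hF.1 _ ((tr_str hM).mpr h)
        exact ⟨.par A y t2, (tr_str hM).mpr (STr.parTauL ((tr_str hM).mp hy)),
          by rw [F_par hM]; exact not_or.mpr ⟨hFy, hF.2⟩⟩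
      | parTauR h =>
        obtain ⟨y, hy, hFy⟩ := ih2 hF.2 _ ((tr_str hM).mpr h)
        exact ⟨.par A t1 y, (tr_str hM).mpr (STr.parTauR ((tr_str hM).mp hy)),
          by rw [F_par hM]; exact not_or.mpr ⟨hF.1, hFy⟩⟩

lemma exists_stable_desc_aux (hM : IsStable M) :
    ∀ n, ∀ t : Tm Act, sz t ≤ n → ¬ M.F t → ∃ t', EpsFS M t t' := by
  intro n
  induction n with
  | zero => intro t h; cases t <;> simp [sz] at h
  | succ n ih =>
    intro t hsz hF
    by_cases hst : Stable M t
    · exact ⟨t, ⟨hF, .refl⟩, hst⟩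
    · have : ∃ w, M.Tr t none w := by
        simp only [Stable, not_forall, not_not] at hst; exact hst
      obtain ⟨w, hw⟩ := this
      obtain ⟨y, hy, hFy⟩ := notF_tau_succ hM t hF w hw
      have hle : sz y ≤ n := by
        have := str_sz ((tr_str hM).mp hy); omega
      obtain ⟨t', ⟨hFt', hch⟩, hst'⟩ := ih y hle hFy
      exact ⟨t', ⟨hF, .head ⟨hy, hF, hFy⟩ hch⟩, hst'⟩

lemma exists_stable_desc (hM : IsStable M) {t : Tm Act} (hF : ¬ M.F t) :
    ∃ t', EpsFS M t t' :=
  exists_stable_desc_aux hM (sz t) t le_rfl hF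

lemma isRS_RSs : IsRS M (RSs M) := by
  rintro t s ⟨R, hR, hts⟩
  obtain ⟨h1, h2, h3, h4⟩ := hR t s hts
  exact ⟨h1, h2, fun a t' hw => (h3 a t' hw).imp (fun s' hh => ⟨hh.1, R, hR, hh.2⟩), h4⟩

lemma rss_stable {t s : Tm Act} (h : RSs M t s) : Stable M t ∧ Stable M s :=
  (isRS_RSs t s h).1

lemma rss_notF {t s : Tm Act} (h : RSs M t s) : ¬ M.F t → ¬ M.F s :=
  (isRS_RSs t s h).2.1

lemma rss_sim {t s : Tm Act} (h : RSs M t s) :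
    ∀ (a : Act) t', WeakFS M (some a) t t' → ∃ s', WeakFS M (some a) s s' ∧ RSs M t' s' :=
  (isRS_RSs t s h).2.2.1

lemma rss_ready {t s : Tm Act} (h : RSs M t s) : ¬ M.F t → Ready M t = Ready M s :=
  (isRS_RSs t s h).2.2.2

lemma RSle_notF (hM : IsStable M) {t s : Tm Act} (h : RSle M t s) (hF : ¬ M.F t) :
    ¬ M.F s := by
  obtain ⟨t', ht'⟩ := exists_stable_desc hM hF
  obtain ⟨s', ⟨⟨hFs, _⟩, _⟩, _⟩ := h t' ht'
  exact hFs

end Lemmas2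
end CLL

namespace CLL

section Lemmas3
variable {Act : Type} {M : Model Act}

lemma conj_rtg_decomp (hM : IsStable M) {p q w : Tm Act}
    (h : Relation.ReflTransGen (TauF M) (.conj p q) w) :
    ∃ p' q', w = .conj p' q' ∧ Relation.ReflTransGen (TauF M) p p' ∧
      Relation.ReflTransGen (TauF M) q q' := by
  induction h with
  | refl => exact ⟨p, q, rfl, .refl, .refl⟩
  | tail _ hstep ih =>
    obtain ⟨p', q', rfl, h1, h2⟩ := ih
    obtain ⟨htr, hF1, hF2⟩ := hstep
    rw [tr_str hM] at htr
    cases htr with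
    | conjTauL h =>
        exact ⟨_, q', rfl, h1.tail ⟨(tr_str hM).mpr h, (notF_conj hM hF1).1,
          (notF_conj hM hF2).1⟩, h2⟩
    | conjTauR h =>
        exact ⟨p', _, rfl, h1, h2.tail ⟨(tr_str hM).mpr h, (notF_conj hM hF1).2,
          (notF_conj hM hF2).2⟩⟩

lemma ec_rtg_decomp (hM : IsStable M) {p q w : Tm Act}
    (h : Relation.ReflTransGen (TauF M) (.ec p q) w) :
    ∃ p' q', w = .ec p' q' ∧ Relation.ReflTransGen (TauF M) p p' ∧
      Relation.ReflTransGen (TauF M) q q' := by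
  induction h with
  | refl => exact ⟨p, q, rfl, .refl, .refl⟩
  | tail _ hstep ih =>
    obtain ⟨p', q', rfl, h1, h2⟩ := ih
    obtain ⟨htr, hF1, hF2⟩ := hstep
    rw [F_ec hM] at hF1
    push_neg at hF1
    rw [tr_str hM] at htr
    cases htr with
    | ecTauL h =>
        rw [F_ec hM] at hF2; push_neg at hF2
        exact ⟨_, q', rfl, h1.tail ⟨(tr_str hM).mpr h, hF1.1, hF2.1⟩, h2⟩
    | ecTauR h =>
        rw [F_ec hM] at hF2; push_neg at hF2
        exact ⟨p', _, rfl, h1, h2.tail ⟨(tr_str hM).mpr h, hF1.2, hF2.2⟩⟩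

lemma par_rtg_decomp (hM : IsStable M) {A : Set Act} {p q w : Tm Act}
    (h : Relation.ReflTransGen (TauF M) (.par A p q) w) :
    ∃ p' q', w = .par A p' q' ∧ Relation.ReflTransGen (TauF M) p p' ∧
      Relation.ReflTransGen (TauF M) q q' := by
  induction h with
  | refl => exact ⟨p, q, rfl, .refl, .refl⟩
  | tail _ hstep ih =>
    obtain ⟨p', q', rfl, h1, h2⟩ := ih
    obtain ⟨htr, hF1, hF2⟩ := hstep
    rw [F_par hM] at hF1
    push_neg at hF1
    rw [tr_str hM] at htr
    cases htr with
    | parTauL h =>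
        rw [F_par hM] at hF2; push_neg at hF2
        exact ⟨_, q', rfl, h1.tail ⟨(tr_str hM).mpr h, hF1.1, hF2.1⟩, h2⟩
    | parTauR h =>
        rw [F_par hM] at hF2; push_neg at hF2
        exact ⟨p', _, rfl, h1, h2.tail ⟨(tr_str hM).mpr h, hF1.2, hF2.2⟩⟩

lemma ec_eps (hM : IsStable M) {p p' q q' : Tm Act}
    (hp : Relation.ReflTransGen (TauF M) p p') (hq : Relation.ReflTransGen (TauF M) q q')
    (hFp : ¬ M.F p) (hFq : ¬ M.F q) : EpsF M (.ec p q) (.ec p' q') := by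
  have hFp' : ¬ M.F p' := rtg_notF hp hFp
  have hFq' : ¬ M.F q' := rtg_notF hq hFq
  have notFec : ∀ {x y : Tm Act}, ¬ M.F x → ¬ M.F y → ¬ M.F (.ec x y) := by
    intro x y hx hy; rw [F_ec hM]; exact not_or.mpr ⟨hx, hy⟩
  refine ⟨notFec hFp hFq, Relation.ReflTransGen.trans (b := .ec p' q) ?_ ?_⟩
  · clear hq
    induction hp with
    | refl => exact .refl
    | tail _ hstep ih =>
      exact (ih (rtg_notF (by assumption) hFp)).tail
        ⟨(tr_str hM).mpr (STr.ecTauL ((tr_str hM).mp hstep.1)),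
        notFec hstep.2.1 hFq, notFec hstep.2.2 hFq⟩
  · induction hq with
    | refl => exact .refl
    | tail _ hstep ih =>
      exact (ih (rtg_notF (by assumption) hFq)).tail
        ⟨(tr_str hM).mpr (STr.ecTauR ((tr_str hM).mp hstep.1)),
        notFec hFp' hstep.2.1, notFec hFp' hstep.2.2⟩

lemma par_eps (hM : IsStable M) {A : Set Act} {p p' q q' : Tm Act}
    (hp : Relation.ReflTransGen (TauF M) p p') (hq : Relation.ReflTransGen (TauF M) q q')
    (hFp : ¬ M.F p) (hFq : ¬ M.F q) : EpsF M (.par A p q) (.par A p' q') := by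
  have hFp' : ¬ M.F p' := rtg_notF hp hFp
  have notFpar : ∀ {x y : Tm Act}, ¬ M.F x → ¬ M.F y → ¬ M.F (.par A x y) := by
    intro x y hx hy; rw [F_par hM]; exact not_or.mpr ⟨hx, hy⟩
  refine ⟨notFpar hFp hFq, Relation.ReflTransGen.trans (b := .par A p' q) ?_ ?_⟩
  · clear hq
    induction hp with
    | refl => exact .refl
    | tail _ hstep ih =>
      exact (ih (rtg_notF (by assumption) hFp)).tail
        ⟨(tr_str hM).mpr (STr.parTauL ((tr_str hM).mp hstep.1)),
        notFpar hstep.2.1 hFq, notFpar hstep.2.2 hFq⟩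
  · induction hq with
    | refl => exact .refl
    | tail _ hstep ih =>
      exact ih.tail
        ⟨(tr_str hM).mpr (STr.parTauR ((tr_str hM).mp hstep.1)),
        notFpar hFp' hstep.2.1, notFpar hFp' hstep.2.2⟩

lemma notF_conj_unstable (hM : IsStable M) {p q w : Tm Act}
    (hFp : ¬ M.F p) (hFq : ¬ M.F q)
    (hw : M.Tr (.conj p q) none w) (hFw : ¬ M.F w) : ¬ M.F (.conj p q) := by
  intro hF
  rw [f_sf hM] at hF
  cases hF with
  | conjL h => exact hFp ((f_sf hM).mpr h)
  | conjR h => exact hFq ((f_sf hM).mpr h)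
  | conjMisL h1 h2 h3 => exact h3 _ hw
  | conjMisR h1 h2 h3 => exact h3 _ hw
  | conjDead hz hb =>
    cases hz with
    | conjAct h1 h2 =>
      have hwS := (tr_str hM).mp hw
      cases hwS with
      | conjTauL h =>
        exact not_vis_of_tau hM p ⟨_, (tr_str hM).mpr h⟩ _ _ ((tr_str hM).mpr h1)
      | conjTauR h =>
        exact not_vis_of_tau hM q ⟨_, (tr_str hM).mpr h⟩ _ _ ((tr_str hM).mpr h2)
    | conjTauL h =>
      exact hb ((fbar_sfbar hM).mpr (SFbar.intro ((tr_str hM).mp hw) hFw))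
    | conjTauR h =>
      exact hb ((fbar_sfbar hM).mpr (SFbar.intro ((tr_str hM).mp hw) hFw))

lemma conj_eps_right (hM : IsStable M) {p q q' : Tm Act}
    (hq : Relation.ReflTransGen (TauF M) q q') (hFp : ¬ M.F p)
    (hend : ¬ M.F (.conj p q')) : EpsF M (.conj p q) (.conj p q') := by
  induction hq using Relation.ReflTransGen.head_induction_on with
  | refl => exact ⟨hend, .refl⟩
  | head hstep _ ih =>
    have htr : M.Tr (.conj p _) none (.conj p _) :=
      (tr_str hM).mpr (STr.conjTauR ((tr_str hM).mp hstep.1))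
    have hnF := notF_conj_unstable hM hFp hstep.2.1 htr ih.1
    exact ⟨hnF, ih.2.head ⟨htr, hnF, ih.1⟩⟩

lemma conj_eps (hM : IsStable M) {p p' q q' : Tm Act}
    (hp : Relation.ReflTransGen (TauF M) p p') (hq : Relation.ReflTransGen (TauF M) q q')
    (hFq : ¬ M.F q) (hend : ¬ M.F (.conj p' q')) : EpsF M (.conj p q) (.conj p' q') := by
  induction hp using Relation.ReflTransGen.head_induction_on with
  | refl => exact conj_eps_right hM hq (notF_conj hM hend).1 hend
  | head hstep _ ih =>
    have htr : M.Tr (.conj _ q) none (.conj _ q) :=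
      (tr_str hM).mpr (STr.conjTauL ((tr_str hM).mp hstep.1))
    have hnF := notF_conj_unstable hM hstep.2.1 hFq htr ih.1
    exact ⟨hnF, ih.2.head ⟨htr, hnF, ih.1⟩⟩

end Lemmas3
end CLL

namespace CLL

section Lemmas4
variable {Act : Type} {M : Model Act}

lemma weakFS_stable_src (hM : IsStable M) {t u : Tm Act} {a : Act}
    (hst : Stable M t) (h : WeakFS M (some a) t u) :
    ∃ y, ¬ M.F t ∧ M.Tr t (some a) y ∧ EpsF M y u ∧ Stable M u := by
  obtain ⟨⟨r, p, hEr, htr, hEp⟩, hstu⟩ := h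
  have : r = t := stable_rtg hM hst hEr.2
  subst this
  exact ⟨p, hEr.1, htr, hEp, hstu⟩

lemma conj_notF_transfer (hM : IsStable M) :
    ∀ n (p q p' q' : Tm Act), sz p' + sz q' ≤ n →
    Stable M p → Stable M q → RSs M p p' → RSs M q q' →
    ¬ M.F (.conj p q) → ¬ M.F (.conj p' q') := by
  intro n
  induction n with
  | zero => intro p q p' q' h; cases p' <;> simp [sz] at h
  | succ n ih =>
    intro p q p' q' hsz hp hq hpp hqq hF hF'
    have hp' : Stable M p' := (rss_stable hpp).2
    have hq' : Stable M q' := (rss_stable hqq).2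
    have hFpq := notF_conj hM hF
    have hrdy1 : Ready M p = Ready M p' := rss_ready hpp hFpq.1
    have hrdy2 : Ready M q = Ready M q' := rss_ready hqq hFpq.2
    have hstconj : Stable M (Tm.conj p q) := (stable_conj_iff hM).mpr ⟨hp, hq⟩
    rw [f_sf hM] at hF'
    cases hF' with
    | conjL h => exact rss_notF hpp hFpq.1 ((f_sf hM).mpr h)
    | conjR h => exact rss_notF hqq hFpq.2 ((f_sf hM).mpr h)
    | conjMisL h1 h2 h3 =>
      rename_i y1 a
      have ha : ∃ y, M.Tr p (some a) y := by
        have : (some a : Option Act) ∈ Ready M p' := ⟨_, (tr_str hM).mpr h1⟩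
        rw [← hrdy1] at this; exact this
      obtain ⟨y0, hy0⟩ := ha
      apply hF
      rw [f_sf hM]
      refine SF.conjMisL ((tr_str hM).mp hy0) (fun y hy => ?_) (fun y hy => hstconj y hy)
      have : (some a : Option Act) ∈ Ready M q := ⟨y, hy⟩
      rw [hrdy2] at this
      obtain ⟨z, hz⟩ := this
      exact h2 z hz
    | conjMisR h1 h2 h3 =>
      rename_i y2 a
      have ha : ∃ y, M.Tr q (some a) y := by
        have : (some a : Option Act) ∈ Ready M q' := ⟨_, (tr_str hM).mpr h2⟩
        rw [← hrdy2] at this; exact this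
      obtain ⟨y0, hy0⟩ := ha
      apply hF
      rw [f_sf hM]
      refine SF.conjMisR (fun y hy => ?_) ((tr_str hM).mp hy0) (fun y hy => hstconj y hy)
      have : (some a : Option Act) ∈ Ready M p := ⟨y, hy⟩
      rw [hrdy1] at this
      obtain ⟨z, hz⟩ := this
      exact h1 z hz
    | conjDead hz hb =>
      cases hz with
      | conjTauL h => exact hp' _ ((tr_str hM).mpr h)
      | conjTauR h => exact hq' _ ((tr_str hM).mpr h)
      | conjAct h1 h2 =>
        rename_i w1 w2 a
        have hpa : ∃ y, M.Tr p (some a) y := by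
          have : (some a : Option Act) ∈ Ready M p' := ⟨_, (tr_str hM).mpr h1⟩
          rw [← hrdy1] at this; exact this
        have hqa : ∃ y, M.Tr q (some a) y := by
          have : (some a : Option Act) ∈ Ready M q' := ⟨_, (tr_str hM).mpr h2⟩
          rw [← hrdy2] at this; exact this
        obtain ⟨u0, hu0⟩ := hpa
        obtain ⟨v0, hv0⟩ := hqa
        have htr0 : M.Tr (.conj p q) (some a) (.conj u0 v0) :=
          (tr_str hM).mpr (STr.conjAct ((tr_str hM).mp hu0) ((tr_str hM).mp hv0))
        obtain ⟨w, hw, hFw⟩ := conj_succ_notF hM hF htr0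
        rw [tr_str hM] at hw
        cases hw with
        | conjAct hu1 hv1 =>
          -- hu1 : STr M p (some a) u1, hv1 : STr M q (some a) v1, w = conj u1 v1
          obtain ⟨wst, ⟨hFw0, hch⟩, hstw⟩ := exists_stable_desc hM hFw
          obtain ⟨u1', v1', rfl, hch1, hch2⟩ := conj_rtg_decomp hM hch
          have hFw' : ¬ M.F (.conj u1' v1') := rtg_notF hch hFw
          have hstu := (stable_conj_iff hM).mp hstw
          have hFuv := notF_conj hM hFw
          have hWp : WeakFS M (some a) p u1' :=
            ⟨⟨p, _, ⟨hFpq.1, .refl⟩, (tr_str hM).mpr hu1, ⟨hFuv.1, hch1⟩⟩, hstu.1⟩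
          have hWq : WeakFS M (some a) q v1' :=
            ⟨⟨q, _, ⟨hFpq.2, .refl⟩, (tr_str hM).mpr hv1, ⟨hFuv.2, hch2⟩⟩, hstu.2⟩
          obtain ⟨u2, hWp', hRu⟩ := rss_sim hpp a u1' hWp
          obtain ⟨v2, hWq', hRv⟩ := rss_sim hqq a v1' hWq
          obtain ⟨y2, _, hy2, hEy2, hstu2⟩ := weakFS_stable_src hM hp' hWp'
          obtain ⟨z2, _, hz2, hEz2, hstv2⟩ := weakFS_stable_src hM hq' hWq'
          have hszle : sz u2 + sz v2 ≤ n := by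
            have a1 : sz u2 ≤ sz y2 := rtg_sz hM hEy2.2
            have a2 : sz y2 < sz p' := str_sz ((tr_str hM).mp hy2)
            have a3 : sz v2 ≤ sz z2 := rtg_sz hM hEz2.2
            have a4 : sz z2 < sz q' := str_sz ((tr_str hM).mp hz2)
            omega
          have hIH : ¬ M.F (.conj u2 v2) :=
            ih u1' v1' u2 v2 hszle hstu.1 hstu.2 hRu hRv hFw'
          have hE := conj_eps hM hEy2.2 hEz2.2 hEz2.1 hIH
          exact hb ((fbar_sfbar hM).mpr (SFbar.intro
            (STr.conjAct ((tr_str hM).mp hy2) ((tr_str hM).mp hz2)) hE.1))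

end Lemmas4
end CLL

namespace CLL

section Lemmas5
variable {Act : Type} {M : Model Act}

lemma ready_pre (hM : IsStable M) {α : Option Act} {t : Tm Act} :
    Ready M (.pre α t) = {α} := by
  ext β
  constructor
  · rintro ⟨u, hu⟩; rw [tr_str hM] at hu; cases hu; rfl
  · rintro rfl; exact ⟨t, (tr_str hM).mpr (STr.pre _ t)⟩

lemma isRS_pre (hM : IsStable M) (a : Act) :
    IsRS M (fun x y => (∃ u v, x = .pre (some a) u ∧ y = .pre (some a) v ∧
      RSle M u v ∧ ¬ M.F u) ∨ RSs M x y) := by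
  rintro x y (⟨u, v, rfl, rfl, huv, hFu⟩ | h)
  · have hFv : ¬ M.F v := RSle_notF hM huv hFu
    refine ⟨⟨stable_pre_vis hM, stable_pre_vis hM⟩, ?_, ?_, ?_⟩
    · intro _; rw [F_pre hM]; exact hFv
    · intro b w hW
      obtain ⟨mid, hFpre, htr, hEmid, hstw⟩ := weakFS_stable_src hM (stable_pre_vis hM) hW
      rw [tr_str hM] at htr
      cases htr
      obtain ⟨w', ⟨hEw', hstw'⟩, hRS⟩ := huv w ⟨hEmid, hstw⟩
      refine ⟨w', ⟨⟨.pre (some a) v, v, ⟨by rw [F_pre hM]; exact hFv, .refl⟩,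
        (tr_str hM).mpr (STr.pre (some a) v), hEw'⟩, hstw'⟩, Or.inr hRS⟩
    · intro _; rw [ready_pre hM, ready_pre hM]
  · obtain ⟨h1, h2, h3, h4⟩ := isRS_RSs x y h
    exact ⟨h1, h2, fun b w hW => (h3 b w hW).imp (fun s' hh => ⟨hh.1, Or.inr hh.2⟩), h4⟩

lemma isRS_ec (hM : IsStable M) :
    IsRS M (fun x y => (∃ p q p' q', x = .ec p q ∧ y = .ec p' q' ∧
      RSs M p p' ∧ RSs M q q') ∨ RSs M x y) := by
  rintro x y (⟨p, q, p', q', rfl, rfl, hpp, hqq⟩ | h)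
  · have hp := (rss_stable hpp).1
    have hp' := (rss_stable hpp).2
    have hq := (rss_stable hqq).1
    have hq' := (rss_stable hqq).2
    have hstx : Stable M (Tm.ec p q) := (stable_ec_iff hM).mpr ⟨hp, hq⟩
    have hsty : Stable M (Tm.ec p' q') := (stable_ec_iff hM).mpr ⟨hp', hq'⟩
    refine ⟨⟨hstx, hsty⟩, ?_, ?_, ?_⟩
    · intro hF
      rw [F_ec hM] at hF ⊢
      push_neg at hF ⊢
      exact ⟨rss_notF hpp hF.1, rss_notF hqq hF.2⟩
    · intro b w hW
      obtain ⟨mid, hFx, htr, hEmid, hstw⟩ := weakFS_stable_src hM hstx hW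
      rw [F_ec hM] at hFx; push_neg at hFx
      have hFy : ¬ M.F (Tm.ec p' q') := by
        rw [F_ec hM]; push_neg
        exact ⟨rss_notF hpp hFx.1, rss_notF hqq hFx.2⟩
      rw [tr_str hM] at htr
      cases htr with
      | ecL h1 _ =>
        obtain ⟨w', hW', hRS⟩ := rss_sim hpp b w
          ⟨⟨p, mid, ⟨hFx.1, .refl⟩, (tr_str hM).mpr h1, hEmid⟩, hstw⟩
        obtain ⟨y', _, hy', hEy', hstw'⟩ := weakFS_stable_src hM hp' hW'
        exact ⟨w', ⟨⟨.ec p' q', y', ⟨hFy, .refl⟩,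
          (tr_str hM).mpr (STr.ecL ((tr_str hM).mp hy') (fun z hz => hq' z hz)), hEy'⟩,
          hstw'⟩, Or.inr hRS⟩
      | ecR _ h1 =>
        obtain ⟨w', hW', hRS⟩ := rss_sim hqq b w
          ⟨⟨q, mid, ⟨hFx.2, .refl⟩, (tr_str hM).mpr h1, hEmid⟩, hstw⟩
        obtain ⟨y', _, hy', hEy', hstw'⟩ := weakFS_stable_src hM hq' hW'
        exact ⟨w', ⟨⟨.ec p' q', y', ⟨hFy, .refl⟩,
          (tr_str hM).mpr (STr.ecR (fun z hz => hp' z hz) ((tr_str hM).mp hy')), hEy'⟩,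
          hstw'⟩, Or.inr hRS⟩
    · intro hF
      rw [F_ec hM] at hF; push_neg at hF
      have r1 := rss_ready hpp hF.1
      have r2 := rss_ready hqq hF.2
      ext β
      constructor
      · rintro ⟨u, hu⟩
        rw [tr_str hM] at hu
        cases hu with
        | ecL h1 _ =>
          have hm : _ ∈ Ready M p := ⟨_, (tr_str hM).mpr h1⟩
          rw [r1] at hm
          obtain ⟨u', hu'⟩ := hm
          exact ⟨u', (tr_str hM).mpr (STr.ecL ((tr_str hM).mp hu') (fun z hz => hq' z hz))⟩
        | ecR _ h1 =>
          have hm : _ ∈ Ready M q := ⟨_, (tr_str hM).mpr h1⟩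
          rw [r2] at hm
          obtain ⟨u', hu'⟩ := hm
          exact ⟨u', (tr_str hM).mpr (STr.ecR (fun z hz => hp' z hz) ((tr_str hM).mp hu'))⟩
        | ecTauL h => exact absurd ((tr_str hM).mpr h) (hp _)
        | ecTauR h => exact absurd ((tr_str hM).mpr h) (hq _)
      · rintro ⟨u, hu⟩
        rw [tr_str hM] at hu
        cases hu with
        | ecL h1 _ =>
          have hm : _ ∈ Ready M p' := ⟨_, (tr_str hM).mpr h1⟩
          rw [← r1] at hm
          obtain ⟨u', hu'⟩ := hm
          exact ⟨u', (tr_str hM).mpr (STr.ecL ((tr_str hM).mp hu') (fun z hz => hq z hz))⟩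
        | ecR _ h1 =>
          have hm : _ ∈ Ready M q' := ⟨_, (tr_str hM).mpr h1⟩
          rw [← r2] at hm
          obtain ⟨u', hu'⟩ := hm
          exact ⟨u', (tr_str hM).mpr (STr.ecR (fun z hz => hp z hz) ((tr_str hM).mp hu'))⟩
        | ecTauL h => exact absurd ((tr_str hM).mpr h) (hp' _)
        | ecTauR h => exact absurd ((tr_str hM).mpr h) (hq' _)
  · obtain ⟨h1, h2, h3, h4⟩ := isRS_RSs x y h
    exact ⟨h1, h2, fun b w hW => (h3 b w hW).imp (fun s' hh => ⟨hh.1, Or.inr hh.2⟩), h4⟩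

end Lemmas5
end CLL

namespace CLL

section Lemmas6
variable {Act : Type} {M : Model Act}

lemma isRS_conj (hM : IsStable M) :
    IsRS M (fun x y => ∃ p q p' q', x = .conj p q ∧ y = .conj p' q' ∧
      RSs M p p' ∧ RSs M q q') := by
  rintro x y ⟨p, q, p', q', rfl, rfl, hpp, hqq⟩
  have hp := (rss_stable hpp).1
  have hp' := (rss_stable hpp).2
  have hq := (rss_stable hqq).1
  have hq' := (rss_stable hqq).2
  have hstx : Stable M (Tm.conj p q) := (stable_conj_iff hM).mpr ⟨hp, hq⟩
  have hsty : Stable M (Tm.conj p' q') := (stable_conj_iff hM).mpr ⟨hp', hq'⟩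
  refine ⟨⟨hstx, hsty⟩, ?_, ?_, ?_⟩
  · intro hF
    exact conj_notF_transfer hM (sz p' + sz q') p q p' q' le_rfl hp hq hpp hqq hF
  · intro b w hW
    obtain ⟨mid, hFx, htr, hEmid, hstw⟩ := weakFS_stable_src hM hstx hW
    have hFpq := notF_conj hM hFx
    have hFy : ¬ M.F (Tm.conj p' q') :=
      conj_notF_transfer hM (sz p' + sz q') p q p' q' le_rfl hp hq hpp hqq hFx
    rw [tr_str hM] at htr
    cases htr with
    | conjAct h1 h2 =>
      obtain ⟨y'', z'', rfl, hc1, hc2⟩ := conj_rtg_decomp hM hEmid.2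
      have hFmid := notF_conj hM hEmid.1
      have hFw : ¬ M.F (Tm.conj y'' z'') := rtg_notF hEmid.2 hEmid.1
      have hstuv := (stable_conj_iff hM).mp hstw
      obtain ⟨u2, hWp', hRu⟩ := rss_sim hpp _ y''
        ⟨⟨p, _, ⟨hFpq.1, .refl⟩, (tr_str hM).mpr h1, ⟨hFmid.1, hc1⟩⟩, hstuv.1⟩
      obtain ⟨v2, hWq', hRv⟩ := rss_sim hqq _ z''
        ⟨⟨q, _, ⟨hFpq.2, .refl⟩, (tr_str hM).mpr h2, ⟨hFmid.2, hc2⟩⟩, hstuv.2⟩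
      obtain ⟨y2, _, hy2, hEy2, hstu2⟩ := weakFS_stable_src hM hp' hWp'
      obtain ⟨z2, _, hz2, hEz2, hstv2⟩ := weakFS_stable_src hM hq' hWq'
      have hend : ¬ M.F (Tm.conj u2 v2) :=
        conj_notF_transfer hM (sz u2 + sz v2) y'' z'' u2 v2 le_rfl hstuv.1 hstuv.2 hRu hRv hFw
      have hE := conj_eps hM hEy2.2 hEz2.2 hEz2.1 hend
      exact ⟨.conj u2 v2, ⟨⟨.conj p' q', .conj y2 z2, ⟨hFy, .refl⟩,
        (tr_str hM).mpr (STr.conjAct ((tr_str hM).mp hy2) ((tr_str hM).mp hz2)), hE⟩,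
        (stable_conj_iff hM).mpr ⟨hstu2, hstv2⟩⟩, y'', z'', u2, v2, rfl, rfl, hRu, hRv⟩
  · intro hF
    have hFc := notF_conj hM hF
    have r1 := rss_ready hpp hFc.1
    have r2 := rss_ready hqq hFc.2
    ext β
    constructor
    · rintro ⟨u, hu⟩
      rw [tr_str hM] at hu
      cases hu with
      | conjAct h1 h2 =>
        have hm1 : _ ∈ Ready M p := ⟨_, (tr_str hM).mpr h1⟩
        have hm2 : _ ∈ Ready M q := ⟨_, (tr_str hM).mpr h2⟩
        rw [r1] at hm1; rw [r2] at hm2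
        obtain ⟨u1, hu1⟩ := hm1
        obtain ⟨u2, hu2⟩ := hm2
        exact ⟨_, (tr_str hM).mpr (STr.conjAct ((tr_str hM).mp hu1) ((tr_str hM).mp hu2))⟩
      | conjTauL h => exact absurd ((tr_str hM).mpr h) (hp _)
      | conjTauR h => exact absurd ((tr_str hM).mpr h) (hq _)
    · rintro ⟨u, hu⟩
      rw [tr_str hM] at hu
      cases hu with
      | conjAct h1 h2 =>
        have hm1 : _ ∈ Ready M p' := ⟨_, (tr_str hM).mpr h1⟩
        have hm2 : _ ∈ Ready M q' := ⟨_, (tr_str hM).mpr h2⟩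
        rw [← r1] at hm1; rw [← r2] at hm2
        obtain ⟨u1, hu1⟩ := hm1
        obtain ⟨u2, hu2⟩ := hm2
        exact ⟨_, (tr_str hM).mpr (STr.conjAct ((tr_str hM).mp hu1) ((tr_str hM).mp hu2))⟩
      | conjTauL h => exact absurd ((tr_str hM).mpr h) (hp' _)
      | conjTauR h => exact absurd ((tr_str hM).mpr h) (hq' _)

lemma isRS_par (hM : IsStable M) (A : Set Act) :
    IsRS M (fun x y => ∃ p q p' q', x = .par A p q ∧ y = .par A p' q' ∧
      RSs M p p' ∧ RSs M q q') := by
  rintro x y ⟨p, q, p', q', rfl, rfl, hpp, hqq⟩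
  have hp := (rss_stable hpp).1
  have hp' := (rss_stable hpp).2
  have hq := (rss_stable hqq).1
  have hq' := (rss_stable hqq).2
  have hstx : Stable M (Tm.par A p q) := (stable_par_iff hM).mpr ⟨hp, hq⟩
  have hsty : Stable M (Tm.par A p' q') := (stable_par_iff hM).mpr ⟨hp', hq'⟩
  have hFtrans : ¬ M.F (Tm.par A p q) → ¬ M.F (Tm.par A p' q') := by
    intro hF
    rw [F_par hM] at hF ⊢
    push_neg at hF ⊢
    exact ⟨rss_notF hpp hF.1, rss_notF hqq hF.2⟩
  refine ⟨⟨hstx, hsty⟩, hFtrans, ?_, ?_⟩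
  · intro b w hW
    obtain ⟨mid, hFx, htr, hEmid, hstw⟩ := weakFS_stable_src hM hstx hW
    have hFpq : ¬ M.F p ∧ ¬ M.F q := by
      rw [F_par hM] at hFx; push_neg at hFx; exact hFx
    have hFy := hFtrans hFx
    have hFp' : ¬ M.F p' := rss_notF hpp hFpq.1
    have hFq' : ¬ M.F q' := rss_notF hqq hFpq.2
    rw [tr_str hM] at htr
    cases htr with
    | parL h1 _ ha =>
      rename_i y1 hq0
      obtain ⟨y'', q'', rfl, hc1, hc2⟩ := par_rtg_decomp hM hEmid.2
      have hqq'' : q = q'' := (stable_rtg hM hq hc2).symm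
      subst hqq''
      have hFmid := not_or.mp ((F_par hM).not.mp hEmid.1)
      have hstuv := (stable_par_iff hM).mp hstw
      obtain ⟨u2, hWp', hRu⟩ := rss_sim hpp b y''
        ⟨⟨p, y1, ⟨hFpq.1, .refl⟩, (tr_str hM).mpr h1, ⟨hFmid.1, hc1⟩⟩, hstuv.1⟩
      obtain ⟨y2, _, hy2, hEy2, hstu2⟩ := weakFS_stable_src hM hp' hWp'
      have hE : EpsF M (Tm.par A y2 q') (Tm.par A u2 q') :=
        par_eps hM hEy2.2 .refl hEy2.1 hFq'
      exact ⟨.par A u2 q', ⟨⟨.par A p' q', .par A y2 q', ⟨hFy, .refl⟩,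
        (tr_str hM).mpr (STr.parL ((tr_str hM).mp hy2) (fun z hz => hq' z hz) ha), hE⟩,
        (stable_par_iff hM).mpr ⟨hstu2, hq'⟩⟩, y'', q, u2, q', rfl, rfl, hRu, hqq⟩
    | parR _ h1 ha =>
      rename_i y1 hp0
      obtain ⟨p'', z'', rfl, hc1, hc2⟩ := par_rtg_decomp hM hEmid.2
      have hpp'' : p = p'' := (stable_rtg hM hp hc1).symm
      subst hpp''
      have hFmid := not_or.mp ((F_par hM).not.mp hEmid.1)
      have hstuv := (stable_par_iff hM).mp hstw
      obtain ⟨v2, hWq', hRv⟩ := rss_sim hqq b z''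
        ⟨⟨q, y1, ⟨hFpq.2, .refl⟩, (tr_str hM).mpr h1, ⟨hFmid.2, hc2⟩⟩, hstuv.2⟩
      obtain ⟨z2, _, hz2, hEz2, hstv2⟩ := weakFS_stable_src hM hq' hWq'
      have hE : EpsF M (Tm.par A p' z2) (Tm.par A p' v2) :=
        par_eps hM .refl hEz2.2 hFp' hEz2.1
      exact ⟨.par A p' v2, ⟨⟨.par A p' q', .par A p' z2, ⟨hFy, .refl⟩,
        (tr_str hM).mpr (STr.parR (fun z hz => hp' z hz) ((tr_str hM).mp hz2) ha), hE⟩,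
        (stable_par_iff hM).mpr ⟨hp', hstv2⟩⟩, p, z'', p', v2, rfl, rfl, hpp, hRv⟩
    | parSync h1 h2 ha =>
      rename_i y1 y2'
      obtain ⟨y'', z'', rfl, hc1, hc2⟩ := par_rtg_decomp hM hEmid.2
      have hFmid := not_or.mp ((F_par hM).not.mp hEmid.1)
      have hstuv := (stable_par_iff hM).mp hstw
      obtain ⟨u2, hWp', hRu⟩ := rss_sim hpp b y''
        ⟨⟨p, y1, ⟨hFpq.1, .refl⟩, (tr_str hM).mpr h1, ⟨hFmid.1, hc1⟩⟩, hstuv.1⟩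
      obtain ⟨v2, hWq', hRv⟩ := rss_sim hqq b z''
        ⟨⟨q, y2', ⟨hFpq.2, .refl⟩, (tr_str hM).mpr h2, ⟨hFmid.2, hc2⟩⟩, hstuv.2⟩
      obtain ⟨y2, _, hy2, hEy2, hstu2⟩ := weakFS_stable_src hM hp' hWp'
      obtain ⟨z2, _, hz2, hEz2, hstv2⟩ := weakFS_stable_src hM hq' hWq'
      have hE : EpsF M (Tm.par A y2 z2) (Tm.par A u2 v2) :=
        par_eps hM hEy2.2 hEz2.2 hEy2.1 hEz2.1
      exact ⟨.par A u2 v2, ⟨⟨.par A p' q', .par A y2 z2, ⟨hFy, .refl⟩,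
        (tr_str hM).mpr (STr.parSync ((tr_str hM).mp hy2) ((tr_str hM).mp hz2) ha), hE⟩,
        (stable_par_iff hM).mpr ⟨hstu2, hstv2⟩⟩, y'', z'', u2, v2, rfl, rfl, hRu, hRv⟩
  · intro hF
    have hFc : ¬ M.F p ∧ ¬ M.F q := by
      rw [F_par hM] at hF; push_neg at hF; exact hF
    have r1 := rss_ready hpp hFc.1
    have r2 := rss_ready hqq hFc.2
    ext β
    constructor
    · rintro ⟨u, hu⟩
      rw [tr_str hM] at hu
      cases hu with
      | parL h1 _ ha =>
        have hm : _ ∈ Ready M p := ⟨_, (tr_str hM).mpr h1⟩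
        rw [r1] at hm
        obtain ⟨u', hu'⟩ := hm
        exact ⟨_, (tr_str hM).mpr (STr.parL ((tr_str hM).mp hu') (fun z hz => hq' z hz) ha)⟩
      | parR _ h1 ha =>
        have hm : _ ∈ Ready M q := ⟨_, (tr_str hM).mpr h1⟩
        rw [r2] at hm
        obtain ⟨u', hu'⟩ := hm
        exact ⟨_, (tr_str hM).mpr (STr.parR (fun z hz => hp' z hz) ((tr_str hM).mp hu') ha)⟩
      | parSync h1 h2 ha =>
        have hm1 : _ ∈ Ready M p := ⟨_, (tr_str hM).mpr h1⟩
        have hm2 : _ ∈ Ready M q := ⟨_, (tr_str hM).mpr h2⟩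
        rw [r1] at hm1; rw [r2] at hm2
        obtain ⟨u1, hu1⟩ := hm1
        obtain ⟨u2, hu2⟩ := hm2
        exact ⟨_, (tr_str hM).mpr (STr.parSync ((tr_str hM).mp hu1) ((tr_str hM).mp hu2) ha)⟩
      | parTauL h => exact absurd ((tr_str hM).mpr h) (hp _)
      | parTauR h => exact absurd ((tr_str hM).mpr h) (hq _)
    · rintro ⟨u, hu⟩
      rw [tr_str hM] at hu
      cases hu with
      | parL h1 _ ha =>
        have hm : _ ∈ Ready M p' := ⟨_, (tr_str hM).mpr h1⟩
        rw [← r1] at hm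
        obtain ⟨u', hu'⟩ := hm
        exact ⟨_, (tr_str hM).mpr (STr.parL ((tr_str hM).mp hu') (fun z hz => hq z hz) ha)⟩
      | parR _ h1 ha =>
        have hm : _ ∈ Ready M q' := ⟨_, (tr_str hM).mpr h1⟩
        rw [← r2] at hm
        obtain ⟨u', hu'⟩ := hm
        exact ⟨_, (tr_str hM).mpr (STr.parR (fun z hz => hp z hz) ((tr_str hM).mp hu') ha)⟩
      | parSync h1 h2 ha =>
        have hm1 : _ ∈ Ready M p' := ⟨_, (tr_str hM).mpr h1⟩
        have hm2 : _ ∈ Ready M q' := ⟨_, (tr_str hM).mpr h2⟩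
        rw [← r1] at hm1; rw [← r2] at hm2
        obtain ⟨u1, hu1⟩ := hm1
        obtain ⟨u2, hu2⟩ := hm2
        exact ⟨_, (tr_str hM).mpr (STr.parSync ((tr_str hM).mp hu1) ((tr_str hM).mp hu2) ha)⟩
      | parTauL h => exact absurd ((tr_str hM).mpr h) (hp' _)
      | parTauR h => exact absurd ((tr_str hM).mpr h) (hq' _)

end Lemmas6
end CLL

/-- `⊑_RS` is a precongruence. -/
theorem stmt12 (Act : Type) (M : CLL.Model Act) (hM : CLL.IsStable M)
    (t1 t2 s1 s2 : CLL.Tm Act) (ht : CLL.RSle M t1 t2) (hs : CLL.RSle M s1 s2) :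
    (∀ α : Option Act, CLL.RSle M (CLL.Tm.pre α t1) (CLL.Tm.pre α t2)) ∧
    CLL.RSle M (CLL.Tm.ec t1 s1) (CLL.Tm.ec t2 s2) ∧
    CLL.RSle M (CLL.Tm.conj t1 s1) (CLL.Tm.conj t2 s2) ∧
    (∀ A : Set Act, CLL.RSle M (CLL.Tm.par A t1 s1) (CLL.Tm.par A t2 s2)) ∧
    CLL.RSle M (CLL.Tm.disj t1 s1) (CLL.Tm.disj t2 s2) := by
  refine ⟨?_, ?_, ?_, ?_, ?_⟩
  · -- prefix
    rintro (_ | a)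
    · intro u hu
      obtain ⟨⟨hFpre, hch⟩, hst⟩ := hu
      rcases hch.cases_head with heq | ⟨c, hstep, hrest⟩
      · exact absurd ((CLL.tr_str hM).mpr (CLL.STr.pre none t1))
          (by rw [← heq] at hst; exact hst t1)
      · have hstep1 := hstep.1
        rw [CLL.tr_str hM] at hstep1
        cases hstep1
        obtain ⟨s', ⟨⟨hFs', hchs⟩, hsts⟩, hRS⟩ := ht u ⟨⟨hstep.2.2, hrest⟩, hst⟩
        have hnF2 : ¬ M.F (CLL.Tm.pre none t2) := (CLL.F_pre hM).not.mpr hFs'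
        exact ⟨s', ⟨⟨hnF2, .head ⟨(CLL.tr_str hM).mpr (CLL.STr.pre none t2), hnF2, hFs'⟩
          hchs⟩, hsts⟩, hRS⟩
    · intro u hu
      obtain ⟨⟨hFpre, hch⟩, hst⟩ := hu
      have hu' : u = .pre (some a) t1 := CLL.stable_rtg hM (CLL.stable_pre_vis hM) hch
      subst hu'
      have hFt1 : ¬ M.F t1 := (CLL.F_pre hM).not.mp hFpre
      have hFt2 : ¬ M.F t2 := CLL.RSle_notF hM ht hFt1
      exact ⟨.pre (some a) t2, ⟨⟨(CLL.F_pre hM).not.mpr hFt2, .refl⟩, CLL.stable_pre_vis hM⟩,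
        _, CLL.isRS_pre hM a, Or.inl ⟨t1, t2, rfl, rfl, ht, hFt1⟩⟩
  · -- ec
    intro u hu
    obtain ⟨⟨hF0, hch⟩, hst⟩ := hu
    obtain ⟨t1', s1', rfl, h1, h2⟩ := CLL.ec_rtg_decomp hM hch
    have hFc := not_or.mp ((CLL.F_ec hM).not.mp hF0)
    have hstc := (CLL.stable_ec_iff hM).mp hst
    obtain ⟨t2', ⟨⟨hFt2, hch2⟩, hstt2'⟩, hR1⟩ := ht t1' ⟨⟨hFc.1, h1⟩, hstc.1⟩
    obtain ⟨s2', ⟨⟨hFs2, hch2'⟩, hsts2'⟩, hR2⟩ := hs s1' ⟨⟨hFc.2, h2⟩, hstc.2⟩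
    exact ⟨.ec t2' s2', ⟨CLL.ec_eps hM hch2 hch2' hFt2 hFs2,
      (CLL.stable_ec_iff hM).mpr ⟨hstt2', hsts2'⟩⟩,
      _, CLL.isRS_ec hM, Or.inl ⟨t1', s1', t2', s2', rfl, rfl, hR1, hR2⟩⟩
  · -- conj
    intro u hu
    obtain ⟨⟨hF0, hch⟩, hst⟩ := hu
    obtain ⟨t1', s1', rfl, h1, h2⟩ := CLL.conj_rtg_decomp hM hch
    have hFc := CLL.notF_conj hM hF0
    have hstc := (CLL.stable_conj_iff hM).mp hst
    obtain ⟨t2', ⟨⟨hFt2, hch2⟩, hstt2'⟩, hR1⟩ := ht t1' ⟨⟨hFc.1, h1⟩, hstc.1⟩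
    obtain ⟨s2', ⟨⟨hFs2, hch2'⟩, hsts2'⟩, hR2⟩ := hs s1' ⟨⟨hFc.2, h2⟩, hstc.2⟩
    have hFend : ¬ M.F (.conj t1' s1') := CLL.rtg_notF hch hF0
    have hend : ¬ M.F (.conj t2' s2') :=
      CLL.conj_notF_transfer hM (CLL.sz t2' + CLL.sz s2') t1' s1' t2' s2' le_rfl
        hstc.1 hstc.2 hR1 hR2 hFend
    exact ⟨.conj t2' s2', ⟨CLL.conj_eps hM hch2 hch2' hFs2 hend,
      (CLL.stable_conj_iff hM).mpr ⟨hstt2', hsts2'⟩⟩,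
      _, CLL.isRS_conj hM, ⟨t1', s1', t2', s2', rfl, rfl, hR1, hR2⟩⟩
  · -- par
    intro A u hu
    obtain ⟨⟨hF0, hch⟩, hst⟩ := hu
    obtain ⟨t1', s1', rfl, h1, h2⟩ := CLL.par_rtg_decomp hM hch
    have hFc := not_or.mp ((CLL.F_par hM).not.mp hF0)
    have hstc := (CLL.stable_par_iff hM).mp hst
    obtain ⟨t2', ⟨⟨hFt2, hch2⟩, hstt2'⟩, hR1⟩ := ht t1' ⟨⟨hFc.1, h1⟩, hstc.1⟩
    obtain ⟨s2', ⟨⟨hFs2, hch2'⟩, hsts2'⟩, hR2⟩ := hs s1' ⟨⟨hFc.2, h2⟩, hstc.2⟩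
    exact ⟨.par A t2' s2', ⟨CLL.par_eps hM hch2 hch2' hFt2 hFs2,
      (CLL.stable_par_iff hM).mpr ⟨hstt2', hsts2'⟩⟩,
      _, CLL.isRS_par hM A, ⟨t1', s1', t2', s2', rfl, rfl, hR1, hR2⟩⟩
  · -- disj
    intro u hu
    obtain ⟨⟨hF0, hch⟩, hst⟩ := hu
    rcases hch.cases_head with heq | ⟨c, hstep, hrest⟩
    · exact absurd ((CLL.tr_str hM).mpr (CLL.STr.disjL t1 s1))
        (by rw [← heq] at hst; exact hst t1)
    · have hstep1 := hstep.1
      rw [CLL.tr_str hM] at hstep1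
      cases hstep1 with
      | disjL =>
        obtain ⟨s', ⟨⟨hFs', hchs⟩, hsts⟩, hRS⟩ := ht u ⟨⟨hstep.2.2, hrest⟩, hst⟩
        have hnFd : ¬ M.F (CLL.Tm.disj t2 s2) := by
          rw [CLL.F_disj hM]; exact fun hh => hFs' hh.1
        exact ⟨s', ⟨⟨hnFd, .head ⟨(CLL.tr_str hM).mpr (CLL.STr.disjL t2 s2), hnFd, hFs'⟩
          hchs⟩, hsts⟩, hRS⟩
      | disjR =>
        obtain ⟨s', ⟨⟨hFs', hchs⟩, hsts⟩, hRS⟩ := hs u ⟨⟨hstep.2.2, hrest⟩, hst⟩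
        have hnFd : ¬ M.F (CLL.Tm.disj t2 s2) := by
          rw [CLL.F_disj hM]; exact fun hh => hFs' hh.2
        exact ⟨s', ⟨⟨hnFd, .head ⟨(CLL.tr_str hM).mpr (CLL.STr.disjR t2 s2), hnFd, hFs'⟩
          hchs⟩, hsts⟩, hRS⟩
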